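/- Let N be an odd positive integer and c = (c₁,c₂,c₃) ∈ ℝ³. The matrix ϖ(c) is positive semidefinite if and only if c₁² + c₂² + c₃² ≤ 1, i.e. if and only if (c₁,c₂,c₃) lies in the closed Euclidean unit ball of ℝ³. -/

import Mathlib

open Matrix BigOperators Polynomial
open scoped ComplexOrder

/-- The three Pauli matrices. -/
noncomputable def pauli : Fin 3 → Matrix (Fin 2) (Fin 2) ℂ :=
  ![!![0, 1; 1, 0], !![0, -Complex.I; Complex.I, 0], !![1, 0; 0, -1]]

/-- The `N`-fold Kronecker power of a 2×2 matrix, with rows and columns indexed by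
`Fin N → Fin 2` (the `N`-qubit computational basis). -/
noncomputable def kronPow (A : Matrix (Fin 2) (Fin 2) ℂ) (N : ℕ) :
    Matrix (Fin N → Fin 2) (Fin N → Fin 2) ℂ :=
  Matrix.of fun i j => ∏ k, A (i k) (j k)

/-- The `M³_N` state `ϖ(c) = 2^{-N} (I + c₁ σ₁^{⊗N} + c₂ σ₂^{⊗N} + c₃ σ₃^{⊗N})`. -/
noncomputable def Mstate (N : ℕ) (c : Fin 3 → ℝ) :
    Matrix (Fin N → Fin 2) (Fin N → Fin 2) ℂ :=
  ((2 : ℂ) ^ N)⁻¹ • (1 + ∑ j : Fin 3, (c j : ℂ) • kronPow (pauli j) N)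

/-!
For odd `N` the Kronecker powers `σⱼ^{⊗N}` still square to `1` and pairwise anticommute, since
`(-1)^N = -1`. Hence `A = ∑ cⱼ σⱼ^{⊗N}` is a traceless Hermitian matrix with `A² = |c|² · 1`.
If `|c| ≤ 1`, then `2 (1 + A) = (1 + A)ᴴ (1 + A) + (1 - |c|²)` is positive semidefinite. If
`|c| > 1`, then `A ≠ |c| · 1` because `A` is traceless, so `-|c|` is an eigenvalue of `A` and
`1 - |c| < 0` an eigenvalue of `1 + A`.
-/

section KroneckerPower

variable (A B : Matrix (Fin 2) (Fin 2) ℂ) (N : ℕ)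

lemma kronPow_mul : kronPow A N * kronPow B N = kronPow (A * B) N := by
  ext i j
  simp only [kronPow, mul_apply, of_apply, Finset.prod_univ_sum, Fintype.piFinset_univ,
    Finset.prod_mul_distrib]

lemma kronPow_one : kronPow 1 N = 1 := by
  ext i j
  by_cases h : i = j
  · subst h; simp [kronPow]
  · obtain ⟨k, hk⟩ := Function.ne_iff.mp h
    simpa [kronPow, one_apply, h] using Finset.prod_eq_zero (Finset.mem_univ k) (by simp [hk])

lemma kronPow_conjTranspose : (kronPow A N)ᴴ = kronPow Aᴴ N := by
  ext i j
  simp [kronPow, conjTranspose_apply, star_prod]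

lemma kronPow_smul (a : ℂ) : kronPow (a • A) N = a ^ N • kronPow A N := by
  ext i j
  simp [kronPow, Finset.prod_mul_distrib]

lemma kronPow_neg {N : ℕ} (hN : Odd N) : kronPow (-A) N = -kronPow A N := by
  rw [← neg_one_smul ℂ A, kronPow_smul, hN.neg_one_pow, neg_one_smul]

lemma trace_kronPow : (kronPow A N).trace = A.trace ^ N := by
  simp only [trace, Matrix.diag, kronPow, of_apply, ← Fin.prod_const, Fintype.prod_sum]

end KroneckerPower

lemma pauli_mul_self (j : Fin 3) : pauli j * pauli j = 1 := by
  fin_cases j <;>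
  · ext a b
    fin_cases a <;> fin_cases b <;> simp [pauli, mul_apply, one_apply]

lemma pauli_isHermitian (j : Fin 3) : (pauli j).IsHermitian := by
  fin_cases j <;>
  · ext a b
    fin_cases a <;> fin_cases b <;> simp [pauli, conjTranspose_apply]

lemma pauli_anticomm {i j : Fin 3} (h : i ≠ j) : pauli i * pauli j = -(pauli j * pauli i) := by
  fin_cases i <;> fin_cases j <;> first
  | exact absurd rfl h
  | · ext a b
      fin_cases a <;> fin_cases b <;> simp [pauli, mul_apply]

lemma trace_pauli (j : Fin 3) : (pauli j).trace = 0 := by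
  fin_cases j <;> simp [pauli, trace]

lemma sum_smul_mul_self_of_anticomm {ι R : Type*} [Fintype ι] [Ring R] [Algebra ℂ R]
    (P : ι → R) (hsq : ∀ i, P i * P i = 1) (hanti : ∀ i j, i ≠ j → P i * P j = -(P j * P i))
    (c : ι → ℂ) : (∑ i, c i • P i) * (∑ i, c i • P i) = (∑ i, c i ^ 2) • 1 := by
  classical
  set T : ι → ι → R := fun i j => (c i * c j) • (P i * P j)
  have hT : ∀ i j, T i j + T j i = if i = j then (2 * c i ^ 2) • 1 else 0 := by
    intro i j
    split_ifs with h
    · subst h; simp only [T, hsq]; module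
    · simp only [T, hanti i j h, mul_comm (c j)]; module
  have hsum : (∑ i, c i • P i) * (∑ i, c i • P i) = ∑ i, ∑ j, T i j := by
    simp only [T, Finset.sum_mul_sum, smul_mul_smul_comm]
  apply smul_right_injective R (two_ne_zero (α := ℂ))
  calc (2 : ℂ) • ((∑ i, c i • P i) * (∑ i, c i • P i))
      = ∑ i, ∑ j, (T i j + T j i) := by
        rw [two_smul, hsum]
        nth_rewrite 2 [Finset.sum_comm]
        simp only [← Finset.sum_add_distrib]
    _ = (2 : ℂ) • ((∑ i, c i ^ 2) • 1) := by
        simp [hT, Finset.sum_smul, Finset.smul_sum, smul_smul]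

lemma Matrix.PosSemidef.nonneg_of_mulVec_eq_smul {n : Type*} [Fintype n] {M : Matrix n n ℂ}
    (hM : M.PosSemidef) {v : n → ℂ} (hv : v ≠ 0) {μ : ℂ} (hμ : M *ᵥ v = μ • v) : 0 ≤ μ := by
  have hpos : 0 < star v ⬝ᵥ v := dotProduct_star_self_pos_iff.mpr hv
  have := hM.dotProduct_mulVec_nonneg v
  rw [hμ, dotProduct_smul, smul_eq_mul] at this
  exact le_of_mul_le_mul_right (by simpa using this) hpos

section OneAdd

variable {n : Type*} [Fintype n] [DecidableEq n] {A : Matrix n n ℂ}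

/-- `(A - s) w` is a `(-s)`-eigenvector because `(A + s)(A - s) = A² - s² = 0`. -/
lemma exists_mulVec_eq_neg_smul {s : ℂ} (hsq : A * A = s ^ 2 • 1) (hA : A ≠ s • 1) :
    ∃ v ≠ 0, A *ᵥ v = -s • v := by
  obtain ⟨w, hw⟩ : ∃ w, A *ᵥ w ≠ s • w := by
    by_contra! h
    exact hA (ext_iff_mulVec.mpr fun w => by rw [h, smul_mulVec, one_mulVec])
  refine ⟨A *ᵥ w - s • w, sub_ne_zero.mpr hw, ?_⟩
  rw [mulVec_sub, mulVec_smul, mulVec_mulVec, hsq, smul_mulVec, one_mulVec]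
  module

lemma posSemidef_one_add_iff {r : ℝ} [Nonempty n] (hA : A.IsHermitian) (htr : A.trace = 0)
    (hsq : A * A = (r : ℂ) • 1) : (1 + A).PosSemidef ↔ r ≤ 1 := by
  constructor
  · intro h
    by_contra! hr
    set s := Real.sqrt r
    have hs : 1 < s := by simpa using Real.sqrt_lt_sqrt zero_le_one hr
    have hsq' : A * A = (s : ℂ) ^ 2 • 1 := by
      rw [hsq, ← Complex.ofReal_pow, Real.sq_sqrt (by linarith)]
    have hA1 : A ≠ (s : ℂ) • 1 := by
      rintro rfl
      simp [Fintype.card_ne_zero, (by linarith : s ≠ 0)] at htr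
    obtain ⟨v, hv, hAv⟩ := exists_mulVec_eq_neg_smul hsq' hA1
    have h1s := h.nonneg_of_mulVec_eq_smul hv (μ := ((1 - s : ℝ) : ℂ)) (by
      rw [add_mulVec, one_mulVec, hAv]; push_cast; module)
    linarith [Complex.zero_le_real.mp h1s]
  · intro hr
    have h2 : 1 + A = (2 : ℂ)⁻¹ • ((1 + A)ᴴ * (1 + A) + ((1 - r : ℝ) : ℂ) • 1) := by
      rw [conjTranspose_add, conjTranspose_one, hA.eq]
      simp only [add_mul, mul_add, one_mul, mul_one, hsq]
      push_cast
      module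
    rw [h2]
    refine .smul (.add (posSemidef_conjTranspose_mul_self _) (.smul .one ?_)) (by positivity)
    exact Complex.zero_le_real.mpr (by linarith)

end OneAdd

lemma Matrix.posSemidef_smul_iff_of_pos {n : Type*} [Fintype n] {M : Matrix n n ℂ} {t : ℂ}
    (ht : 0 < t) : (t • M).PosSemidef ↔ M.PosSemidef :=
  ⟨fun h => by simpa [smul_smul, inv_mul_cancel₀ ht.ne'] using h.smul (inv_nonneg.mpr ht.le),
    fun h => h.smul ht.le⟩

noncomputable def pauliKronSum (N : ℕ) (c : Fin 3 → ℝ) :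
    Matrix (Fin N → Fin 2) (Fin N → Fin 2) ℂ :=
  ∑ j : Fin 3, (c j : ℂ) • kronPow (pauli j) N

lemma Mstate_eq_smul_one_add (N : ℕ) (c : Fin 3 → ℝ) :
    Mstate N c = ((2 : ℂ) ^ N)⁻¹ • (1 + pauliKronSum N c) := rfl

lemma pauliKronSum_isHermitian (N : ℕ) (c : Fin 3 → ℝ) : (pauliKronSum N c).IsHermitian := by
  refine isSelfAdjoint_sum _ fun j _ => IsSelfAdjoint.smul (Complex.conj_ofReal _) ?_
  rw [IsSelfAdjoint, star_eq_conjTranspose, kronPow_conjTranspose, (pauli_isHermitian j).eq]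

lemma trace_pauliKronSum {N : ℕ} (hN : N ≠ 0) (c : Fin 3 → ℝ) :
    (pauliKronSum N c).trace = 0 := by
  simp [pauliKronSum, trace_sum, trace_kronPow, trace_pauli, zero_pow hN]

lemma pauliKronSum_mul_self {N : ℕ} (hN : Odd N) (c : Fin 3 → ℝ) :
    pauliKronSum N c * pauliKronSum N c = ((∑ j, c j ^ 2 : ℝ) : ℂ) • 1 := by
  rw [pauliKronSum, sum_smul_mul_self_of_anticomm]
  · push_cast; rfl
  · intro j; rw [kronPow_mul, pauli_mul_self, kronPow_one]
  · intro i j h; rw [kronPow_mul, kronPow_mul, pauli_anticomm h, kronPow_neg _ hN]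

theorem stmt3 (N : ℕ) (hN : Odd N) (c : Fin 3 → ℝ) :
    (Mstate N c).PosSemidef ↔ c 0 ^ 2 + c 1 ^ 2 + c 2 ^ 2 ≤ 1 := by
  rw [Mstate_eq_smul_one_add, posSemidef_smul_iff_of_pos (by positivity),
    posSemidef_one_add_iff (pauliKronSum_isHermitian N c) (trace_pauliKronSum hN.pos.ne' c)
      (pauliKronSum_mul_self hN c), Fin.sum_univ_three]
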